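/- arXiv:1103.0465 — 2 statements merged into one kernel-verified Lean document; each statement's English description precedes it below -/
import Mathlib

section
/- For any sequences F, G in (ℝ^d)^{N+1} with F_0 = F_N = 0, the discrete Grünwald–Letnikov fractional difference operators of order α satisfy the discrete fractional integration by parts: ∑_{k=1}^{N} (Δ₋^α F)_k · G_k = ∑_{k=0}^{N-1} F_k · (Δ₊^α G)_k. -/
open Finset

/-- Generalized binomial coefficient `C^r_α = α(α−1)⋯(α−r+1)/r!`. -/
noncomputable def genBinom (α : ℝ) (r : ℕ) : ℝ :=
  (∏ i ∈ Finset.range r, (α - i)) / (Nat.factorial r)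

/-- Discrete left Grünwald–Letnikov fractional difference of order α. -/
noncomputable def glLeft {d : ℕ} (α h : ℝ) (F : ℕ → EuclideanSpace ℝ (Fin d))
    (k : ℕ) : EuclideanSpace ℝ (Fin d) :=
  (h ^ α)⁻¹ • ∑ r ∈ Finset.range (k + 1), ((-1 : ℝ) ^ r * genBinom α r) • F (k - r)

/-- Discrete right Grünwald–Letnikov fractional difference of order α. -/
noncomputable def glRight {d : ℕ} (α h : ℝ) (N : ℕ) (G : ℕ → EuclideanSpace ℝ (Fin d))
    (k : ℕ) : EuclideanSpace ℝ (Fin d) :=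
  (h ^ α)⁻¹ • ∑ r ∈ Finset.range (N - k + 1), ((-1 : ℝ) ^ r * genBinom α r) • G (k + r)

/-!
Both sides are the same double sum `∑_{0 ≤ j ≤ k ≤ N} (-1)^(k-j) C^(k-j)_α ⟪F_j, G_k⟫ / h^α`,
summed once over `k` first and once over `j` first: the left operator is a lower triangular
Toeplitz matrix and the right one is its transpose. The boundary terms `k = 0` on the left
and `j = N` on the right vanish because `F_0 = F_N = 0`.
-/

section Convolution

variable {E : Type*} [NormedAddCommGroup E] [InnerProductSpace ℝ E] (c : ℕ → ℝ)

theorem sum_range_succ_smul_sub_reflect (F : ℕ → E) (k : ℕ) :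
    ∑ r ∈ range (k + 1), c r • F (k - r) = ∑ j ∈ range (k + 1), c (k - j) • F j := by
  rw [← sum_range_reflect]
  refine sum_congr rfl fun j hj => ?_
  rw [mem_range] at hj
  rw [show k + 1 - 1 - j = k - j by omega, Nat.sub_sub_self (by omega)]

theorem sum_range_sub_succ_smul_add_eq {N k : ℕ} (hk : k ≤ N) (G : ℕ → E) :
    ∑ r ∈ range (N - k + 1), c r • G (k + r) = ∑ m ∈ Ico k (N + 1), c (m - k) • G m := by
  rw [sum_Ico_eq_sum_range, show N + 1 - k = N - k + 1 by omega]
  simp only [Nat.add_sub_cancel_left]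

theorem sum_inner_convolution_eq_sum_inner_adjoint (F G : ℕ → E) (N : ℕ) :
    ∑ k ∈ range (N + 1), inner ℝ (∑ r ∈ range (k + 1), c r • F (k - r)) (G k)
      = ∑ k ∈ range (N + 1), inner ℝ (F k) (∑ r ∈ range (N - k + 1), c r • G (k + r)) := by
  have hleft : ∀ k, inner ℝ (∑ r ∈ range (k + 1), c r • F (k - r)) (G k)
      = ∑ j ∈ Ico 0 (k + 1), c (k - j) * inner ℝ (F j) (G k) := fun k => by
    rw [sum_range_succ_smul_sub_reflect, sum_inner, range_eq_Ico]
    simp only [real_inner_smul_left]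
  have hright : ∀ k ∈ range (N + 1),
      inner ℝ (F k) (∑ r ∈ range (N - k + 1), c r • G (k + r))
        = ∑ m ∈ Ico k (N + 1), c (m - k) * inner ℝ (F k) (G m) := fun k hk => by
    rw [sum_range_sub_succ_smul_add_eq c (Nat.lt_succ_iff.mp (mem_range.mp hk)), inner_sum]
    simp only [real_inner_smul_right]
  rw [sum_congr rfl hright, sum_congr rfl fun k _ => hleft k, range_eq_Ico,
    sum_Ico_Ico_comm]

end Convolution

theorem glLeft_zero {d : ℕ} (α h : ℝ) (F : ℕ → EuclideanSpace ℝ (Fin d)) :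
    glLeft α h F 0 = (h ^ α)⁻¹ • F 0 := by
  simp [glLeft, genBinom]

theorem sum_inner_glLeft_eq_sum_inner_glRight {d : ℕ} (α h : ℝ) (N : ℕ)
    (F G : ℕ → EuclideanSpace ℝ (Fin d)) :
    ∑ k ∈ range (N + 1), inner ℝ (glLeft α h F k) (G k)
      = ∑ k ∈ range (N + 1), inner ℝ (F k) (glRight α h N G k) := by
  simp only [glLeft, glRight, real_inner_smul_left, real_inner_smul_right, ← mul_sum]
  rw [sum_inner_convolution_eq_sum_inner_adjoint]

theorem discrete_fractional_integration_by_parts_F_general (d N : ℕ)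
    (α h : ℝ)
    (F G : ℕ → EuclideanSpace ℝ (Fin d)) (hF0 : F 0 = 0) (hFN : F N = 0) :
    ∑ k ∈ Finset.Icc 1 N, (inner ℝ (glLeft α h F k) (G k) : ℝ)
      = ∑ k ∈ Finset.range N, (inner ℝ (F k) (glRight α h N G k) : ℝ) := by
  calc ∑ k ∈ Icc 1 N, inner ℝ (glLeft α h F k) (G k)
      = ∑ k ∈ range (N + 1), inner ℝ (glLeft α h F k) (G k) := by
        rw [range_eq_Ico, sum_eq_sum_Ico_succ_bot N.succ_pos, glLeft_zero, hF0, smul_zero,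
          inner_zero_left, zero_add, Nat.succ_eq_add_one, zero_add, Ico_add_one_right_eq_Icc]
    _ = ∑ k ∈ range (N + 1), inner ℝ (F k) (glRight α h N G k) :=
        sum_inner_glLeft_eq_sum_inner_glRight α h N F G
    _ = ∑ k ∈ range N, inner ℝ (F k) (glRight α h N G k) := by
        rw [sum_range_succ, hFN, inner_zero_left, add_zero]

/-- Discrete fractional integration by parts (case `F₀ = F_N = 0`). -/
theorem discrete_fractional_integration_by_parts_F (d N : ℕ) (hN : 0 < N)
    (α h : ℝ) (hα0 : 0 < α) (hα1 : α < 1) (hh : 0 < h)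
    (F G : ℕ → EuclideanSpace ℝ (Fin d)) (hF0 : F 0 = 0) (hFN : F N = 0) :
    ∑ k ∈ Finset.Icc 1 N, (inner ℝ (glLeft α h F k) (G k) : ℝ)
      = ∑ k ∈ Finset.range N, (inner ℝ (F k) (glRight α h N G k) : ℝ) :=
  discrete_fractional_integration_by_parts_F_general d N α h F G hF0 hFN
end

section
/- For any sequences F, G in (ℝ^d)^{N+1} with G_0 = G_N = 0, the discrete Grünwald–Letnikov fractional difference operators of order α satisfy: ∑_{k=1}^{N} (Δ₋^α F)_k · G_k = ∑_{k=0}^{N-1} F_k · (Δ₊^α G)_k. -/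
open Finset

/-!
Both sides expand to the double sum of `(-1)^r C^r_α ⟪F_j, G_{j+r}⟫ / h^α` over the triangle
`j + r ≤ N`: the left one indexed by `k = j + r`, the right one by `j`. Over the full range
`k = 0, …, N` the two operators are therefore adjoint; the boundary terms `k = 0` on the left
and `k = N` on the right are multiples of `G_0` and `G_N`.
-/

theorem Finset.sum_range_diag_shift {M : Type*} [AddCommMonoid M]
    (N : ℕ) (f : ℕ → ℕ → M) :
    ∑ k ∈ range (N + 1), ∑ r ∈ range (k + 1), f (k - r) r
      = ∑ j ∈ range (N + 1), ∑ r ∈ range (N - j + 1), f j r := by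
  rw [sum_sigma', sum_sigma']
  refine sum_nbij' (fun p ↦ ⟨p.1 - p.2, p.2⟩) (fun p ↦ ⟨p.1 + p.2, p.2⟩) ?_ ?_ ?_ ?_ ?_ <;>
    simp only [mem_sigma, mem_range, Sigma.forall, Sigma.mk.injEq, heq_eq_eq, and_true,
      implies_true]
  all_goals intro a b _; omega

theorem inner_glLeft {d : ℕ} (α h : ℝ) (F : ℕ → EuclideanSpace ℝ (Fin d)) (k : ℕ)
    (v : EuclideanSpace ℝ (Fin d)) :
    inner ℝ (glLeft α h F k) v
      = (h ^ α)⁻¹ * ∑ r ∈ range (k + 1), (-1 : ℝ) ^ r * genBinom α r * inner ℝ (F (k - r)) v := by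
  simp only [glLeft, real_inner_smul_left, sum_inner]

theorem inner_glRight {d : ℕ} (α h : ℝ) (N : ℕ) (G : ℕ → EuclideanSpace ℝ (Fin d)) (k : ℕ)
    (v : EuclideanSpace ℝ (Fin d)) :
    inner ℝ v (glRight α h N G k)
      = (h ^ α)⁻¹ * ∑ r ∈ range (N - k + 1),
          (-1 : ℝ) ^ r * genBinom α r * inner ℝ v (G (k + r)) := by
  simp only [glRight, real_inner_smul_right, inner_sum]

theorem discrete_fractional_integration_by_parts_G_general (d N : ℕ)
    (α h : ℝ)
    (F G : ℕ → EuclideanSpace ℝ (Fin d)) (hG0 : G 0 = 0) (hGN : G N = 0) :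
    ∑ k ∈ Finset.Icc 1 N, (inner ℝ (glLeft α h F k) (G k) : ℝ)
      = ∑ k ∈ Finset.range N, (inner ℝ (F k) (glRight α h N G k) : ℝ) := by
  have hleft : ∑ k ∈ range (N + 1), inner ℝ (glLeft α h F k) (G k)
      = ∑ k ∈ Icc 1 N, inner ℝ (glLeft α h F k) (G k) := by
    rw [range_eq_Ico, sum_eq_sum_Ico_succ_bot N.add_one_pos, zero_add, Ico_add_one_right_eq_Icc,
      hG0, inner_zero_right, zero_add]
  have hright : glRight α h N G N = 0 := by simp [glRight, hGN]
  rw [← hleft, sum_inner_glLeft_eq_sum_inner_glRight, sum_range_succ, hright, inner_zero_right,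
    add_zero]

/-- Discrete fractional integration by parts (case `G₀ = G_N = 0`). -/
theorem discrete_fractional_integration_by_parts_G (d N : ℕ) (hN : 0 < N)
    (α h : ℝ) (hα0 : 0 < α) (hα1 : α < 1) (hh : 0 < h)
    (F G : ℕ → EuclideanSpace ℝ (Fin d)) (hG0 : G 0 = 0) (hGN : G N = 0) :
    ∑ k ∈ Finset.Icc 1 N, (inner ℝ (glLeft α h F k) (G k) : ℝ)
      = ∑ k ∈ Finset.range N, (inner ℝ (F k) (glRight α h N G k) : ℝ) :=
  discrete_fractional_integration_by_parts_G_general d N α h F G hG0 hGN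
end
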